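/- Spectral properties, part 6: Let X be a complex infinite-dimensional separable Banach space and let A be a densely defined linear operator in X such that every power A^n (n ∈ ℕ) is a closed operator, and suppose there exist a set Y ⊆ C^∞(A) dense in X and a mapping B : Y → Y with ABf = f for every f ∈ Y, such that (a) Y ⊆ ⋃_{n≥1} ker A^n, and (b) for every f ∈ Y and every α ∈ (0,1) there exists c = c(f,α) > 0 with ‖B^n f‖ ≤ c·α^n for all n ∈ ℕ. Then for every γ ∈ (0,1) there exists M ∈ ℕ such that for all n ≥ M the closed disk {λ ∈ ℂ : |λ| ≤ 1/γ^n} is contained in σ_p(A^n); in particular, for every λ ∈ ℂ there exists M ∈ ℕ such that λ ∈ σ_p(A^n) for all n ≥ M. -/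

import Mathlib

open Filter Topology TopologicalSpace

/-- The domain of the `n`-th power of the operator `A` with domain `D`:
`x ∈ D(Aⁿ)` iff `Aᵏx ∈ D(A)` for all `k < n`. -/
def opDom {X : Type*} (A : X → X) (D : Set X) (n : ℕ) : Set X :=
  {x | ∀ k < n, A^[k] x ∈ D}

/-- `C^∞(A) = ⋂ₙ D(Aⁿ)`. -/
def opCinf {X : Type*} (A : X → X) (D : Set X) : Set X :=
  {x | ∀ k : ℕ, A^[k] x ∈ D}

/-- `A` is linear on the subspace `D`. -/
def IsLinearOn (𝕜 : Type*) {X : Type*} [RCLike 𝕜] [NormedAddCommGroup X]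
    [NormedSpace 𝕜 X] (A : X → X) (D : Set X) : Prop :=
  (∀ x ∈ D, ∀ y ∈ D, A (x + y) = A x + A y) ∧
  (∀ (c : 𝕜), ∀ x ∈ D, A (c • x) = c • A x)

/-- The `n`-th power of `A` (with domain `D`) is a closed operator:
its graph is closed in `X × X`. -/
def ClosedPower {X : Type*} [NormedAddCommGroup X] (A : X → X) (D : Set X)
    (n : ℕ) : Prop :=
  IsClosed {p : X × X | p.1 ∈ opDom A D n ∧ p.2 = A^[n] p.1}

/-- A hypercyclic vector for `A`: a nonzero `f ∈ C^∞(A)` with dense orbit. -/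
def HypercyclicVec {X : Type*} [NormedAddCommGroup X] (A : X → X) (D : Set X)
    (f : X) : Prop :=
  f ∈ opCinf A D ∧ f ≠ 0 ∧ Dense (Set.range fun n : ℕ => A^[n] f)

/-- `A` (with domain `D`) is hypercyclic. -/
def HypercyclicOp {X : Type*} [NormedAddCommGroup X] (A : X → X) (D : Set X) :
    Prop :=
  ∃ f, HypercyclicVec A D f

/-- `f` is a periodic point of `A`: `f ∈ D(A^N)` and `A^N f = f` for some `N ≥ 1`. -/
def PeriodicPt {X : Type*} (A : X → X) (D : Set X) (f : X) : Prop :=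
  ∃ N : ℕ, 0 < N ∧ f ∈ opDom A D N ∧ A^[N] f = f

/-- `A` (with domain `D`) is chaotic: hypercyclic with a dense set of periodic
points. -/
def ChaoticOp {X : Type*} [NormedAddCommGroup X] (A : X → X) (D : Set X) : Prop :=
  HypercyclicOp A D ∧ Dense {f | PeriodicPt A D f}

/-- The local quantity `r(T,f) = limsup ‖Tⁿ f‖^{1/n}`, computed in `ℝ≥0∞`. -/
noncomputable def orbitRad {X : Type*} [NormedAddCommGroup X] (T : X → X)
    (f : X) : ENNReal :=
  Filter.limsup (fun n : ℕ => (‖T^[n] f‖₊ : ENNReal) ^ (1 / (n : ℝ))) Filter.atTop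

/-- The point spectrum of the `n`-th power of `A` (with domain `D`):
`λ ∈ σ_p(Aⁿ)` iff `Aⁿ g = λ g` for some nonzero `g ∈ D(Aⁿ)`. -/
def pointSpecPow {X : Type*} [NormedAddCommGroup X] [NormedSpace ℂ X]
    (A : X → X) (D : Set X) (n : ℕ) : Set ℂ :=
  {l | ∃ g, g ≠ 0 ∧ g ∈ opDom A D n ∧ A^[n] g = l • g}

/-! Take `f ∈ Y \ {0}` and `n` with `Aⁿ f = 0`. For `|λ| ≤ γ⁻ⁿ` the series
`h = ∑ⱼ λʲ B^{jn} f` converges, since hypothesis (b) with `α = γ²` gives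
`‖λʲ B^{jn} f‖ ≤ c γ^{jn}`. As `AB = I` on `Y`, `Aⁿ` maps each partial sum `S_{m+1}` to `λ S_m`,
and closedness of `Aⁿ` gives `Aⁿ h = λ h`. For `n` large the tail `h - f` has norm at most
`c γⁿ / (1 - γⁿ) < ‖f‖`, so `h ≠ 0`. -/

theorem Set.LeftInvOn.iterate {α : Type*} {f g : α → α} {s : Set α} (hfg : Set.LeftInvOn g f s)
    (hf : Set.MapsTo f s s) (n : ℕ) : Set.LeftInvOn g^[n] f^[n] s := by
  induction n with
  | zero => exact fun _ _ => rfl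
  | succ n ih =>
    intro x hx
    rw [Function.iterate_succ_apply, Function.iterate_succ_apply' f, hfg (hf.iterate n hx), ih hx]

theorem exists_pos_forall_ge_of_eventually_atTop {P : ℕ → Prop} (h : ∀ᶠ n in atTop, P n) :
    ∃ M, 0 < M ∧ ∀ n ≥ M, P n := by
  obtain ⟨M, hM⟩ := eventually_atTop.mp h
  exact ⟨M + 1, M.succ_pos, fun n hn => hM n (by omega)⟩

theorem opDom_mono {X : Type*} {A : X → X} {D : Set X} {m n : ℕ} (hmn : m ≤ n) :
    opDom A D n ⊆ opDom A D m :=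
  fun _ hx k hk => hx k (hk.trans_le hmn)

theorem opCinf_subset_opDom {X : Type*} {A : X → X} {D : Set X} (n : ℕ) :
    opCinf A D ⊆ opDom A D n :=
  fun _ hx k _ => hx k

theorem summable_and_tsum_ne_zero_of_norm_le_geometric {E : Type*} [NormedAddCommGroup E]
    [CompleteSpace E] {v : ℕ → E} {c r : ℝ} (hr0 : 0 ≤ r) (hr1 : r < 1)
    (hv : ∀ j, ‖v (j + 1)‖ ≤ c * r ^ (j + 1)) (hsmall : c * r / (1 - r) < ‖v 0‖) :
    Summable v ∧ ∑' j, v j ≠ 0 := by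
  have hgeom : HasSum (fun j : ℕ => c * r * r ^ j) (c * r / (1 - r)) := by
    simpa only [div_eq_mul_inv] using (hasSum_geometric_of_lt_one hr0 hr1).mul_left (c * r)
  have hv' : ∀ j, ‖v (j + 1)‖ ≤ c * r * r ^ j := fun j => by
    simpa only [pow_succ', mul_assoc] using hv j
  have htail : Summable fun j => v (j + 1) := .of_norm_bounded hgeom.summable hv'
  have hsum : Summable v := (summable_nat_add_iff 1).mp htail
  refine ⟨hsum, fun h0 => ?_⟩
  have htail_eq : ∑' j, v (j + 1) = -v 0 := by
    rw [hsum.tsum_eq_zero_add] at h0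
    exact eq_neg_of_add_eq_zero_right h0
  have htail_le := tsum_of_norm_bounded hgeom hv'
  rw [htail_eq, norm_neg] at htail_le
  linarith

section LinearOn

variable {𝕜 X : Type*} [RCLike 𝕜] [NormedAddCommGroup X] [NormedSpace 𝕜 X]
  {D : Submodule 𝕜 X} {A : X → X}

theorem IsLinearOn.map_zero (hlin : IsLinearOn 𝕜 A D) : A 0 = 0 := by
  simpa using hlin.2 0 0 D.zero_mem

theorem IsLinearOn.iterate_map_add (hlin : IsLinearOn 𝕜 A D) {n : ℕ} {x y : X}
    (hx : x ∈ opDom A D n) (hy : y ∈ opDom A D n) :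
    A^[n] (x + y) = A^[n] x + A^[n] y := by
  induction n with
  | zero => rfl
  | succ n ih =>
    rw [Function.iterate_succ_apply', ih (opDom_mono n.le_succ hx) (opDom_mono n.le_succ hy),
      hlin.1 _ (hx n n.lt_succ_self) _ (hy n n.lt_succ_self)]
    simp only [Function.iterate_succ_apply']

theorem IsLinearOn.iterate_map_smul (hlin : IsLinearOn 𝕜 A D) {n : ℕ} (c : 𝕜) {x : X}
    (hx : x ∈ opDom A D n) : A^[n] (c • x) = c • A^[n] x := by
  induction n with
  | zero => rfl
  | succ n ih =>
    rw [Function.iterate_succ_apply', ih (opDom_mono n.le_succ hx),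
      hlin.2 c _ (hx n n.lt_succ_self), Function.iterate_succ_apply']

def IsLinearOn.domPow (hlin : IsLinearOn 𝕜 A D) (n : ℕ) : Submodule 𝕜 X where
  carrier := opDom A D n
  add_mem' {x y} hx hy k hk := by
    rw [hlin.iterate_map_add (opDom_mono hk.le hx) (opDom_mono hk.le hy)]
    exact D.add_mem (hx k hk) (hy k hk)
  zero_mem' k _ := by
    rw [Function.iterate_fixed hlin.map_zero]
    exact D.zero_mem
  smul_mem' c x hx k hk := by
    rw [hlin.iterate_map_smul c (opDom_mono hk.le hx)]
    exact D.smul_mem c (hx k hk)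

theorem IsLinearOn.iterate_map_sum (hlin : IsLinearOn 𝕜 A D) {n : ℕ} {ι : Type*} (s : Finset ι)
    (c : ι → 𝕜) {v : ι → X} (hv : ∀ j, v j ∈ opDom A D n) :
    A^[n] (∑ j ∈ s, c j • v j) = ∑ j ∈ s, c j • A^[n] (v j) := by
  induction s using Finset.cons_induction with
  | empty => exact Function.iterate_fixed hlin.map_zero n
  | cons j s _ ih =>
    have hsum : ∑ i ∈ s, c i • v i ∈ hlin.domPow n :=
      Submodule.sum_mem _ fun i _ => Submodule.smul_mem _ _ (hv i)
    have hj : c j • v j ∈ hlin.domPow n := Submodule.smul_mem _ _ (hv j)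
    rw [Finset.sum_cons, Finset.sum_cons, hlin.iterate_map_add hj hsum,
      hlin.iterate_map_smul _ (hv j), ih]

end LinearOn

section PointSpectrum

variable {X : Type*} [NormedAddCommGroup X] [NormedSpace ℂ X]
  {D : Submodule ℂ X} {A : X → X} {n : ℕ}

theorem mem_pointSpecPow_of_hasSum (hlin : IsLinearOn ℂ A D) (hcl : ClosedPower A D n)
    {v : ℕ → X} (hv : ∀ j, v j ∈ opDom A D n) (hv0 : A^[n] (v 0) = 0)
    (hvs : ∀ j, A^[n] (v (j + 1)) = v j) {l : ℂ} {h : X}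
    (hh : HasSum (fun j => l ^ j • v j) h) (hne : h ≠ 0) :
    l ∈ pointSpecPow A D n := by
  set S : ℕ → X := fun m => ∑ j ∈ Finset.range m, l ^ j • v j
  have hS : Tendsto S atTop (𝓝 h) := hh.tendsto_sum_nat
  have hS_dom : ∀ m, S m ∈ opDom A D n := fun m =>
    (hlin.domPow n).sum_mem fun j _ => (hlin.domPow n).smul_mem _ (hv j)
  have hS_map : ∀ m, A^[n] (S (m + 1)) = l • S m := fun m => by
    rw [hlin.iterate_map_sum _ _ hv, Finset.sum_range_succ', hv0, smul_zero, add_zero,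
      Finset.smul_sum]
    simp only [hvs, pow_succ', mul_smul]
  have hgraph : (h, l • h) ∈ {p : X × X | p.1 ∈ opDom A D n ∧ p.2 = A^[n] p.1} :=
    hcl.mem_of_tendsto ((hS.comp (tendsto_add_atTop_nat 1)).prodMk_nhds (hS.const_smul l))
      (Eventually.of_forall fun m => ⟨hS_dom (m + 1), (hS_map m).symm⟩)
  exact ⟨h, hne, hgraph.1, hgraph.2.symm⟩

variable [CompleteSpace X] {Y : Set X} {B : X → X}

theorem mem_pointSpecPow_of_backward_orbit (hlin : IsLinearOn ℂ A D) (hcl : ClosedPower A D n)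
    (hYsub : Y ⊆ opCinf A D) (hBmaps : Set.MapsTo B Y Y) (hAB : Set.LeftInvOn A B Y)
    {f : X} (hf : f ∈ Y) (hfn : A^[n] f = 0) {l : ℂ} {c r : ℝ} (hr0 : 0 ≤ r) (hr1 : r < 1)
    (hbound : ∀ j, ‖l ^ (j + 1) • B^[(j + 1) * n] f‖ ≤ c * r ^ (j + 1))
    (hsmall : c * r / (1 - r) < ‖f‖) :
    l ∈ pointSpecPow A D n := by
  obtain ⟨hsum, hne⟩ := summable_and_tsum_ne_zero_of_norm_le_geometric
    (v := fun j => l ^ j • B^[j * n] f) hr0 hr1 hbound (by simpa using hsmall)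
  refine mem_pointSpecPow_of_hasSum hlin hcl (v := fun j => B^[j * n] f)
    (fun j => opCinf_subset_opDom n (hYsub (hBmaps.iterate _ hf))) (by simpa using hfn)
    (fun j => ?_) hsum.hasSum hne
  rw [show (j + 1) * n = n + j * n by ring, Function.iterate_add_apply]
  exact hAB.iterate hBmaps n (hBmaps.iterate _ hf)

theorem eventually_norm_le_imp_mem_pointSpecPow (hlin : IsLinearOn ℂ A D)
    (hcl : ∀ n : ℕ, 0 < n → ClosedPower A D n) (hYsub : Y ⊆ opCinf A D)
    (hBmaps : Set.MapsTo B Y Y) (hAB : Set.LeftInvOn A B Y) {f : X} (hf : f ∈ Y) (hf0 : f ≠ 0)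
    (hnil : ∀ᶠ n in atTop, A^[n] f = 0) {γ c : ℝ} (hγ0 : 0 < γ) (hγ1 : γ < 1)
    (hc : ∀ k : ℕ, 0 < k → ‖B^[k] f‖ ≤ c * (γ ^ 2) ^ k) :
    ∀ᶠ n in atTop, ∀ l : ℂ, ‖l‖ ≤ 1 / γ ^ n → l ∈ pointSpecPow A D n := by
  have hγn := tendsto_pow_atTop_nhds_zero_of_lt_one hγ0.le hγ1
  have hlim : Tendsto (fun n : ℕ => c * γ ^ n / (1 - γ ^ n)) atTop (𝓝 0) := by
    have h := (hγn.const_mul c).div (tendsto_const_nhds.sub hγn) (by norm_num : (1 : ℝ) - 0 ≠ 0)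
    rwa [mul_zero, zero_div] at h
  filter_upwards [hnil, hlim.eventually_lt_const (norm_pos_iff.mpr hf0), eventually_gt_atTop 0]
    with n hfn hsmall hn l hl
  refine mem_pointSpecPow_of_backward_orbit hlin (hcl n hn) hYsub hBmaps hAB hf hfn
    (by positivity) (pow_lt_one₀ hγ0.le hγ1 hn.ne') (fun j => ?_) hsmall
  have hB := hc ((j + 1) * n) (Nat.mul_pos j.succ_pos hn)
  calc ‖l ^ (j + 1) • B^[(j + 1) * n] f‖
      = ‖l‖ ^ (j + 1) * ‖B^[(j + 1) * n] f‖ := by rw [norm_smul, norm_pow]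
    _ ≤ (1 / γ ^ n) ^ (j + 1) * (c * (γ ^ 2) ^ ((j + 1) * n)) :=
        mul_le_mul (pow_le_pow_left₀ (norm_nonneg l) hl _) hB (norm_nonneg _) (by positivity)
    _ = c * (γ ^ n) ^ (j + 1) := by
        rw [show (γ ^ 2) ^ ((j + 1) * n) = (γ ^ n) ^ (j + 1) * (γ ^ n) ^ (j + 1) by
          rw [← pow_mul, ← pow_mul, ← pow_add]; ring_nf, div_pow, one_pow]
        field_simp

end PointSpectrum

theorem spectral_properties_part6_general
    {X : Type*} [NormedAddCommGroup X] [NormedSpace ℂ X]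
    [CompleteSpace X]
    (hinfdim : ¬ FiniteDimensional ℂ X)
    (D : Submodule ℂ X) (A : X → X)
    (hlin : IsLinearOn ℂ A (D : Set X))
    (hcl : ∀ n : ℕ, 0 < n → ClosedPower A (D : Set X) n)
    (Y : Set X) (hYsub : Y ⊆ opCinf A (D : Set X)) (hYdense : Dense Y)
    (B : X → X) (hBmaps : Set.MapsTo B Y Y)
    (h1 : ∀ f ∈ Y, A (B f) = f)
    (h2a : ∀ f ∈ Y, ∃ N : ℕ, ∀ n ≥ N, A^[n] f = 0)
    (h2b : ∀ f ∈ Y, ∀ α ∈ Set.Ioo (0 : ℝ) 1, ∃ c > 0, ∀ n : ℕ, 0 < n →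
      ‖B^[n] f‖ ≤ c * α ^ n) :
    (∀ γ : ℝ, 0 < γ → γ < 1 →
      ∃ M : ℕ, 0 < M ∧ ∀ n ≥ M, ∀ l : ℂ, ‖l‖ ≤ 1 / γ ^ n →
        l ∈ pointSpecPow A (D : Set X) n) ∧
    (∀ l : ℂ, ∃ M : ℕ, 0 < M ∧ ∀ n ≥ M, l ∈ pointSpecPow A (D : Set X) n) := by
  have : Nontrivial X := not_subsingleton_iff_nontrivial.mp fun _ => hinfdim inferInstance
  obtain ⟨f, hfY, hf0⟩ := hYdense.exists_mem_open isOpen_compl_singleton (exists_ne (0 : X))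
  have hnil : ∀ᶠ n in atTop, A^[n] f = 0 := eventually_atTop.mpr (h2a f hfY)
  have disk : ∀ γ : ℝ, 0 < γ → γ < 1 →
      ∀ᶠ n in atTop, ∀ l : ℂ, ‖l‖ ≤ 1 / γ ^ n → l ∈ pointSpecPow A D n := fun γ hγ0 hγ1 => by
    obtain ⟨c, -, hc⟩ := h2b f hfY (γ ^ 2) ⟨by positivity, pow_lt_one₀ hγ0.le hγ1 two_ne_zero⟩
    exact eventually_norm_le_imp_mem_pointSpecPow hlin hcl hYsub hBmaps h1 hfY hf0 hnil hγ0 hγ1 hc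
  refine ⟨fun γ hγ0 hγ1 => exists_pos_forall_ge_of_eventually_atTop (disk γ hγ0 hγ1),
    fun l => exists_pos_forall_ge_of_eventually_atTop ?_⟩
  have hl : ∀ᶠ n in atTop, ‖l‖ ≤ 1 / (1 / 2 : ℝ) ^ n := by
    simpa using (tendsto_pow_atTop_atTop_of_one_lt one_lt_two).eventually_ge_atTop ‖l‖
  filter_upwards [disk (1 / 2) (by norm_num) (by norm_num), hl] with n hn hln using hn l hln

/-- **Spectral properties, part 6.** -/
theorem spectral_properties_part6
    {X : Type*} [NormedAddCommGroup X] [NormedSpace ℂ X]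
    [CompleteSpace X] [SeparableSpace X]
    (hinfdim : ¬ FiniteDimensional ℂ X)
    (D : Submodule ℂ X) (A : X → X)
    (hlin : IsLinearOn ℂ A (D : Set X))
    (hdd : Dense (D : Set X))
    (hcl : ∀ n : ℕ, 0 < n → ClosedPower A (D : Set X) n)
    (Y : Set X) (hYsub : Y ⊆ opCinf A (D : Set X)) (hYdense : Dense Y)
    (B : X → X) (hBmaps : Set.MapsTo B Y Y)
    (h1 : ∀ f ∈ Y, A (B f) = f)
    (h2a : ∀ f ∈ Y, ∃ N : ℕ, ∀ n ≥ N, A^[n] f = 0)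
    (h2b : ∀ f ∈ Y, ∀ α ∈ Set.Ioo (0 : ℝ) 1, ∃ c > 0, ∀ n : ℕ, 0 < n →
      ‖B^[n] f‖ ≤ c * α ^ n) :
    (∀ γ : ℝ, 0 < γ → γ < 1 →
      ∃ M : ℕ, 0 < M ∧ ∀ n ≥ M, ∀ l : ℂ, ‖l‖ ≤ 1 / γ ^ n →
        l ∈ pointSpecPow A (D : Set X) n) ∧
    (∀ l : ℂ, ∃ M : ℕ, 0 < M ∧ ∀ n ≥ M, l ∈ pointSpecPow A (D : Set X) n) :=
  spectral_properties_part6_general hinfdim D A hlin hcl Y hYsub hYdense B hBmaps h1 h2a h2b
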